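/- Let H ∈ (0,1), σ > 0, x₀ ∈ ℝ, and a, b ∈ ℝ with κ := (a+b)² − 2^{2H}·a·b > 0. Define P : ℝ × (0,∞) → ℝ by P(x,t) = (2πσ²κt^{2H})^{−1/2} · exp(−(x − x₀ + (1/2)σ²κt^{2H})²/(2σ²κt^{2H})). Then for all x ∈ ℝ and t > 0, P satisfies the generalized fractional Fokker–Planck equation ∂P/∂t = σ²·H·κ·t^{2H−1}·(∂²P/∂x² + ∂P/∂x). -/

import Mathlib

/-!
For `t > 0`, `P(·, t)` is the density of `x₀ - v/2 + W_v` at the variance `v = σ²κt^{2H}`,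
where `W` is a standard Brownian motion. As a function of `(v, x)` this Gaussian kernel solves the
heat equation with drift `∂_v K = (∂²_x K + ∂_x K) / 2`, and the chain rule with
`dv/dt = 2Hσ²κ t^{2H-1}` turns it into the fractional Fokker–Planck equation.
-/

open Real

noncomputable def driftedHeatKernel (x₀ v x : ℝ) : ℝ :=
  (2 * π * v) ^ (-(1 : ℝ) / 2) * exp (-(x - x₀ + v / 2) ^ 2 / (2 * v))

namespace driftedHeatKernel

variable {x₀ v : ℝ}

theorem hasDerivAt_space (hv : 0 < v) (x : ℝ) :
    HasDerivAt (driftedHeatKernel x₀ v)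
      (-(x - x₀ + v / 2) / v * driftedHeatKernel x₀ v x) x := by
  have hshift : HasDerivAt (fun y : ℝ => y - x₀ + v / 2) 1 x :=
    ((hasDerivAt_id x).sub_const x₀).add_const (v / 2)
  have hexp := ((hshift.fun_pow 2).fun_neg.div_const (2 * v)).exp
  refine (hexp.const_mul ((2 * π * v) ^ (-(1 : ℝ) / 2))).congr_deriv ?_
  unfold driftedHeatKernel
  field_simp
  ring

theorem deriv_space (hv : 0 < v) :
    deriv (driftedHeatKernel x₀ v) =
      fun x => -(x - x₀ + v / 2) / v * driftedHeatKernel x₀ v x :=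
  funext fun x => (hasDerivAt_space hv x).deriv

theorem deriv_deriv_space (hv : 0 < v) (x : ℝ) :
    deriv (deriv (driftedHeatKernel x₀ v)) x =
      ((x - x₀ + v / 2) ^ 2 / v ^ 2 - 1 / v) * driftedHeatKernel x₀ v x := by
  have hdrift : HasDerivAt (fun y : ℝ => -(y - x₀ + v / 2) / v) (-1 / v) x := by
    simpa using (((hasDerivAt_id x).sub_const x₀).add_const (v / 2)).neg.div_const v
  rw [deriv_space hv, (hdrift.fun_mul (hasDerivAt_space hv x)).deriv]
  field_simp
  ring

theorem hasDerivAt_variance (hv : 0 < v) (x : ℝ) :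
    HasDerivAt (fun w => driftedHeatKernel x₀ w x)
      (((x - x₀ + v / 2) ^ 2 / (2 * v ^ 2) - (x - x₀ + v / 2) / (2 * v) - 1 / (2 * v)) *
        driftedHeatKernel x₀ v x) v := by
  have hnorm : HasDerivAt (fun w : ℝ => (2 * π * w) ^ (-(1 : ℝ) / 2))
      (-(1 / (2 * v)) * (2 * π * v) ^ (-(1 : ℝ) / 2)) v := by
    have hpos : 0 < 2 * π * v := by positivity
    refine ((hasDerivAt_rpow_const (Or.inl hpos.ne')).comp v
      ((hasDerivAt_id v).const_mul (2 * π))).congr_deriv ?_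
    rw [show -(1 : ℝ) / 2 - 1 = -(1 : ℝ) / 2 + -1 by ring, rpow_add hpos, rpow_neg_one]
    field_simp
  have hshift : HasDerivAt (fun w : ℝ => x - x₀ + w / 2) (1 / 2) v := by
    simpa using ((hasDerivAt_id v).div_const 2).const_add (x - x₀)
  have hexp := ((hshift.fun_pow 2).fun_neg.fun_div ((hasDerivAt_id' v).const_mul 2)
    (by positivity)).exp
  refine (hnorm.fun_mul hexp).congr_deriv ?_
  unfold driftedHeatKernel
  field_simp
  ring

theorem heat_equation (hv : 0 < v) (x : ℝ) :
    HasDerivAt (fun w => driftedHeatKernel x₀ w x)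
      ((deriv (deriv (driftedHeatKernel x₀ v)) x + deriv (driftedHeatKernel x₀ v) x) / 2) v := by
  refine (hasDerivAt_variance hv x).congr_deriv ?_
  rw [deriv_deriv_space hv, deriv_space hv]
  field_simp
  ring

end driftedHeatKernel

theorem gfbm_log_price_fokker_planck
    (H : ℝ)
    (σ : ℝ) (hσ : 0 < σ) (x₀ : ℝ)
    (κ : ℝ) (hκ : 0 < κ)
    (P : ℝ → ℝ → ℝ)
    (hP : ∀ x : ℝ, ∀ t : ℝ, 0 < t →
      P x t = (2 * π * σ ^ 2 * κ * t ^ (2 * H)) ^ (-(1 : ℝ) / 2) *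
        Real.exp (-(x - x₀ + (1 / 2) * σ ^ 2 * κ * t ^ (2 * H)) ^ 2
          / (2 * σ ^ 2 * κ * t ^ (2 * H)))) :
    ∀ x : ℝ, ∀ t : ℝ, 0 < t →
      deriv (fun t' => P x t') t
        = σ ^ 2 * H * κ * t ^ (2 * H - 1) *
            (deriv (deriv (fun x' => P x' t)) x + deriv (fun x' => P x' t) x) := by
  intro x t ht
  have hP_kernel : ∀ y s, 0 < s → P y s = driftedHeatKernel x₀ (σ ^ 2 * κ * s ^ (2 * H)) y := by
    intro y s hs
    rw [hP y s hs, driftedHeatKernel]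
    ring_nf
  have hv : 0 < σ ^ 2 * κ * t ^ (2 * H) := by positivity
  have hvariance : HasDerivAt (fun s : ℝ => σ ^ 2 * κ * s ^ (2 * H))
      (σ ^ 2 * κ * (2 * H * t ^ (2 * H - 1))) t :=
    (hasDerivAt_rpow_const (Or.inl ht.ne')).const_mul (σ ^ 2 * κ)
  have htime : (fun s => P x s) =ᶠ[nhds t]
      (fun w => driftedHeatKernel x₀ w x) ∘ fun s => σ ^ 2 * κ * s ^ (2 * H) := by
    filter_upwards [eventually_gt_nhds ht] with s hs using hP_kernel x s hs
  have hspace : (fun y => P y t) = driftedHeatKernel x₀ (σ ^ 2 * κ * t ^ (2 * H)) :=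
    funext fun y => hP_kernel y t ht
  rw [htime.deriv_eq, ((driftedHeatKernel.heat_equation hv x).comp t hvariance).deriv, hspace]
  ring
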